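/- In the bi-virus SIS model (no shared resource) with B¹ = ν B² and D¹ = ν D² for some ν > 0, B¹ irreducible nonnegative, D¹ positive diagonal, and s(B¹ − D¹) > 0, the two single-virus endemic equilibria coincide, p̃¹ = p̃² = p̃, and s(−D¹ + (I − diag(p̃))B¹) = 0 = s(−D² + (I − diag(p̃))B²). Consequently these parameters cannot satisfy the strict coexistence sufficient conditions s(−D¹ + (I − diag(p̃²))B¹) > 0 and s(−D² + (I − diag(p̃¹))B²) > 0. -/

import Mathlib

open Matrix

/-- The spectral abscissa: the largest real part among the (complex) eigenvalues. -/
noncomputable def spectralAbscissa {α : Type*} [Fintype α] [DecidableEq α]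
    (M : Matrix α α ℝ) : ℝ :=
  sSup ((fun z : ℂ => z.re) '' spectrum ℂ (M.map Complex.ofReal))

/-- The spectral radius of a real matrix. -/
noncomputable def specRad {α : Type*} [Fintype α] [DecidableEq α]
    (M : Matrix α α ℝ) : ℝ :=
  sSup ((fun z : ℂ => ‖z‖) '' spectrum ℂ (M.map Complex.ofReal))

/-- Irreducibility of a matrix: the directed graph on its nonzero entries is strongly
connected, phrased as: no nonempty proper subset of indices is closed. -/
def Irred {α : Type*} [Fintype α] [DecidableEq α] (M : Matrix α α ℝ) : Prop :=
  ∀ S : Finset α, S.Nonempty → S ≠ Finset.univ → ∃ i ∈ S, ∃ j, j ∉ S ∧ M i j ≠ 0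

/-- A Metzler matrix: all off-diagonal entries are nonnegative. -/
def Metzler {α : Type*} [Fintype α] [DecidableEq α] (M : Matrix α α ℝ) : Prop :=
  ∀ i j, i ≠ j → 0 ≤ M i j

/-! Since `B¹ = νB²` and `D¹ = νD²`, both equilibria are fixed points in `(0,1)ⁿ` of the same
map `p ↦ (I - diag p) M p` with `M = D⁻¹B ≥ 0`; comparing two such fixed points at the index
maximising the ratio `p / q` shows that they coincide. The common equilibrium `p̃` is then a
positive null vector of the Metzler matrices `-Dᵏ + (I - diag p̃)Bᵏ`. A positive null vector
makes `0` an eigenvalue, and after shifting the matrix by `c I` to make it nonnegative, the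
Collatz–Wielandt bound puts every eigenvalue in the closed disc of radius `c` around `-c`;
hence the spectral abscissa is `0`. -/

section Field

variable {ι K : Type*} [Fintype ι] [DecidableEq ι] [Field K]

theorem Matrix.mem_spectrum_iff_exists_mulVec_eq_smul (A : Matrix ι ι K) (μ : K) :
    μ ∈ spectrum K A ↔ ∃ v ≠ 0, A *ᵥ v = μ • v := by
  rw [spectrum.mem_iff, isUnit_iff_isUnit_det, isUnit_iff_ne_zero, not_not,
    ← exists_mulVec_eq_zero_iff, Algebra.algebraMap_eq_smul_one]
  simp only [sub_mulVec, smul_mulVec, one_mulVec, sub_eq_zero, eq_comm]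

theorem Matrix.inv_diagonal_of_ne_zero {d : ι → K} (hd : ∀ i, d i ≠ 0) :
    (diagonal d)⁻¹ = diagonal d⁻¹ := by
  refine inv_eq_right_inv ?_
  rw [diagonal_mul_diagonal, ← diagonal_one]
  exact congrArg diagonal (funext fun i => mul_inv_cancel₀ (hd i))

theorem Matrix.inv_diagonal_smul_mul_smul {d : ι → K} (hd : ∀ i, d i ≠ 0) {c : K} (hc : c ≠ 0)
    (B : Matrix ι ι K) : (diagonal (c • d))⁻¹ * (c • B) = (diagonal d)⁻¹ * B := by
  have hcd : ∀ i, (c • d) i ≠ 0 := fun i => smul_ne_zero hc (hd i)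
  rw [inv_diagonal_of_ne_zero hd, inv_diagonal_of_ne_zero hcd]
  ext i j
  simp only [diagonal_mul, Pi.inv_apply, Pi.smul_apply, smul_apply, smul_eq_mul]
  field_simp

theorem Matrix.one_sub_diagonal_mul_mulVec_apply (p v : ι → K) (M : Matrix ι ι K) (i : ι) :
    (((1 - diagonal p) * M) *ᵥ v) i = (1 - p i) * (M *ᵥ v) i := by
  rw [← mulVec_mulVec, sub_mulVec, one_mulVec, Pi.sub_apply, mulVec_diagonal]
  ring

/-- `p` is an equilibrium of the SIS dynamics `ṗ = -D p + (I - diag p) B p` with `D = diag d`,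
written in the fixed-point form `p = (I - diag p) D⁻¹ B p`. -/
def IsSISEquilibrium (B : Matrix ι ι K) (d p : ι → K) : Prop :=
  ((1 - diagonal p) * ((diagonal d)⁻¹ * B)) *ᵥ p = p

theorem isSISEquilibrium_smul_iff {B : Matrix ι ι K} {d p : ι → K} (hd : ∀ i, d i ≠ 0)
    {c : K} (hc : c ≠ 0) : IsSISEquilibrium (c • B) (c • d) p ↔ IsSISEquilibrium B d p := by
  rw [IsSISEquilibrium, IsSISEquilibrium, inv_diagonal_smul_mul_smul hd hc]

theorem IsSISEquilibrium.neg_diagonal_add_mulVec_eq_zero {B : Matrix ι ι K} {d p : ι → K}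
    (hd : ∀ i, d i ≠ 0) (h : IsSISEquilibrium B d p) :
    (-diagonal d + (1 - diagonal p) * B) *ᵥ p = 0 := by
  funext i
  have hi := congrFun h i
  rw [one_sub_diagonal_mul_mulVec_apply, inv_diagonal_of_ne_zero hd, ← mulVec_mulVec,
    mulVec_diagonal, Pi.inv_apply, mul_left_comm, inv_mul_eq_iff_eq_mul₀ (hd i)] at hi
  rw [add_mulVec, Pi.add_apply, one_sub_diagonal_mul_mulVec_apply, neg_mulVec, Pi.neg_apply,
    mulVec_diagonal, Pi.zero_apply]
  linear_combination hi

end Field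

section Real

variable {ι : Type*} [Fintype ι]

theorem norm_le_of_nonneg_of_mulVec_eq_smul {N : Matrix ι ι ℝ} (hN : ∀ i j, 0 ≤ N i j)
    {p : ι → ℝ} (hp : ∀ i, 0 < p i) {r : ℝ} (hNp : N *ᵥ p = r • p) {w : ℂ} {v : ι → ℂ}
    (hv : v ≠ 0) (hNv : N.map Complex.ofReal *ᵥ v = w • v) : ‖w‖ ≤ r := by
  obtain ⟨i, hvi⟩ := Function.ne_iff.mp hv
  obtain ⟨k, -, hk⟩ := Finset.exists_max_image Finset.univ (fun j => ‖v j‖ / p j)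
    ⟨i, Finset.mem_univ i⟩
  set m := ‖v k‖ / p k
  have hle : ∀ j, ‖v j‖ ≤ m * p j := fun j =>
    (div_le_iff₀ (hp j)).mp (hk j (Finset.mem_univ j))
  have hvk : ‖v k‖ = m * p k := (div_mul_cancel₀ _ (hp k).ne').symm
  have hm : 0 < m :=
    (div_pos (norm_pos_iff.mpr hvi) (hp i)).trans_le (hk i (Finset.mem_univ i))
  have key : ‖w‖ * ‖v k‖ ≤ r * ‖v k‖ := calc
    ‖w‖ * ‖v k‖ = ‖∑ j, (N k j : ℂ) * v j‖ := by
      rw [← norm_mul, ← smul_eq_mul, ← Pi.smul_apply, ← hNv]; rfl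
    _ ≤ ∑ j, N k j * ‖v j‖ := (norm_sum_le _ _).trans_eq <| by
      simp only [norm_mul, Complex.norm_real, Real.norm_of_nonneg (hN k _)]
    _ ≤ ∑ j, N k j * (m * p j) :=
      Finset.sum_le_sum fun j _ => mul_le_mul_of_nonneg_left (hle j) (hN k j)
    _ = m * (N *ᵥ p) k := by
      simp only [mulVec, dotProduct, Finset.mul_sum]
      exact Finset.sum_congr rfl fun j _ => by ring
    _ = r * ‖v k‖ := by rw [hNp, Pi.smul_apply, smul_eq_mul, hvk]; ring
  exact le_of_mul_le_mul_right key (hvk ▸ mul_pos hm (hp k))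

variable [DecidableEq ι]

theorem re_le_zero_of_metzler_of_mulVec_eq_zero {A : Matrix ι ι ℝ} (hA : Metzler A)
    {p : ι → ℝ} (hp : ∀ i, 0 < p i) (hAp : A *ᵥ p = 0) {z : ℂ}
    (hz : z ∈ spectrum ℂ (A.map Complex.ofReal)) : z.re ≤ 0 := by
  obtain ⟨v, hv, hAv⟩ := (mem_spectrum_iff_exists_mulVec_eq_smul _ _).mp hz
  set c : ℝ := ∑ i, |A i i|
  have hN : ∀ i j, 0 ≤ (A + c • 1) i j := by
    intro i j
    rcases eq_or_ne i j with rfl | hij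
    · have : |A i i| ≤ c := Finset.single_le_sum (f := fun i => |A i i|)
        (fun j _ => abs_nonneg _) (Finset.mem_univ i)
      simp only [Matrix.add_apply, Matrix.smul_apply, one_apply_eq, smul_eq_mul, mul_one]
      linarith [neg_abs_le (A i i)]
    · simpa [one_apply_ne hij] using hA i j hij
  have hNp : (A + c • 1) *ᵥ p = c • p := by
    rw [add_mulVec, hAp, smul_mulVec, one_mulVec, zero_add]
  have hNv : (A + c • 1).map Complex.ofReal *ᵥ v = (z + c) • v := by
    have : (A + c • 1).map Complex.ofReal = A.map Complex.ofReal + (c : ℂ) • 1 := by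
      ext i j
      rcases eq_or_ne i j with rfl | hij <;> simp [one_apply_ne, *]
    rw [this, add_mulVec, hAv, smul_mulVec, one_mulVec, add_smul]
  have hzc : ‖z + c‖ ≤ c := norm_le_of_nonneg_of_mulVec_eq_smul hN hp hNp hv hNv
  have := Complex.re_le_norm (z + c)
  rw [Complex.add_re, Complex.ofReal_re] at this
  linarith

theorem spectralAbscissa_eq_zero_of_metzler_of_mulVec_eq_zero {A : Matrix ι ι ℝ}
    (hA : Metzler A) {p : ι → ℝ} (hp : ∀ i, 0 < p i) (hAp : A *ᵥ p = 0) :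
    spectralAbscissa A = 0 := by
  rcases isEmpty_or_nonempty ι with hι | ⟨⟨i⟩⟩
  · rw [spectralAbscissa, spectrum.of_subsingleton, Set.image_empty, Real.sSup_empty]
  refine IsGreatest.csSup_eq ⟨⟨0, ?_, Complex.zero_re⟩, ?_⟩
  · rw [mem_spectrum_iff_exists_mulVec_eq_smul]
    refine ⟨Complex.ofReal ∘ p,
      fun h => (hp i).ne' (Complex.ofReal_eq_zero.mp (congrFun h i)), ?_⟩
    ext j
    rw [zero_smul]
    change (A.map Complex.ofRealHom *ᵥ (Complex.ofRealHom ∘ p)) j = 0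
    rw [← RingHom.map_mulVec, hAp, Pi.zero_apply, map_zero]
  · rintro _ ⟨z, hz, rfl⟩
    exact re_le_zero_of_metzler_of_mulVec_eq_zero hA hp hAp hz

end Real

section Equilibrium

variable {ι : Type*} [Fintype ι] [DecidableEq ι]

theorem le_of_one_sub_diagonal_mul_mulVec_eq {M : Matrix ι ι ℝ} (hM : ∀ i j, 0 ≤ M i j)
    {p q : ι → ℝ} (hp : ∀ i, p i ≤ 1) (hq : ∀ i, 0 < q i ∧ q i < 1)
    (hpM : ((1 - diagonal p) * M) *ᵥ p = p) (hqM : ((1 - diagonal q) * M) *ᵥ q = q) :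
    p ≤ q := by
  intro k
  by_contra! hk
  -- `κ = max p/q > 1` is attained at `i`, where the fixed-point equations clash
  obtain ⟨i, -, hi⟩ := Finset.exists_max_image Finset.univ (fun j => p j / q j)
    ⟨k, Finset.mem_univ k⟩
  set κ := p i / q i
  have hκ : 1 < κ := ((one_lt_div (hq k).1).mpr hk).trans_le (hi k (Finset.mem_univ k))
  have hpκq : ∀ j, p j ≤ κ * q j := fun j =>
    (div_le_iff₀ (hq j).1).mp (hi j (Finset.mem_univ j))
  have hpi : p i = κ * q i := (div_mul_cancel₀ _ (hq i).1.ne').symm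
  have hqi : (1 - q i) * (M *ᵥ q) i = q i := by
    rw [← one_sub_diagonal_mul_mulVec_apply, hqM]
  have hpi' : (1 - p i) * (M *ᵥ p) i = p i := by
    rw [← one_sub_diagonal_mul_mulVec_apply, hpM]
  have hMq : 0 < (M *ᵥ q) i :=
    pos_of_mul_pos_right (hqi.symm ▸ (hq i).1) (sub_nonneg.2 (hq i).2.le)
  have hMp : (M *ᵥ p) i ≤ κ * (M *ᵥ q) i := by
    rw [← smul_eq_mul, ← Pi.smul_apply, ← mulVec_smul]
    exact Finset.sum_le_sum fun j _ => mul_le_mul_of_nonneg_left (hpκq j) (hM i j)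
  have hqp : q i < p i := by nlinarith [(hq i).1]
  have := calc
    p i = (1 - p i) * (M *ᵥ p) i := hpi'.symm
    _ ≤ (1 - p i) * (κ * (M *ᵥ q) i) := mul_le_mul_of_nonneg_left hMp (sub_nonneg.2 (hp i))
    _ < (1 - q i) * (κ * (M *ᵥ q) i) := by gcongr
    _ = κ * q i := by rw [mul_left_comm, hqi]
  linarith

theorem IsSISEquilibrium.eq {B : Matrix ι ι ℝ} (hB : ∀ i j, 0 ≤ B i j) {d : ι → ℝ}
    (hd : ∀ i, 0 < d i) {p q : ι → ℝ} (hp : ∀ i, 0 < p i ∧ p i < 1)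
    (hq : ∀ i, 0 < q i ∧ q i < 1) (hpB : IsSISEquilibrium B d p)
    (hqB : IsSISEquilibrium B d q) : p = q := by
  have hM : ∀ i j, 0 ≤ ((diagonal d)⁻¹ * B) i j := fun i j => by
    rw [inv_diagonal_of_ne_zero fun i => (hd i).ne', diagonal_mul]
    exact mul_nonneg (inv_nonneg.2 (hd i).le) (hB i j)
  exact le_antisymm (le_of_one_sub_diagonal_mul_mulVec_eq hM (fun i => (hp i).2.le) hq hpB hqB)
    (le_of_one_sub_diagonal_mul_mulVec_eq hM (fun i => (hq i).2.le) hp hqB hpB)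

theorem metzler_neg_diagonal_add_one_sub_diagonal_mul (d : ι → ℝ) {p : ι → ℝ}
    (hp : ∀ i, p i ≤ 1) {B : Matrix ι ι ℝ} (hB : ∀ i j, 0 ≤ B i j) :
    Metzler (-diagonal d + (1 - diagonal p) * B) := by
  intro i j hij
  simpa [sub_mul, diagonal_apply_ne _ hij, one_sub_mul] using
    mul_nonneg (sub_nonneg.2 (hp i)) (hB i j)

end Equilibrium

theorem sis_proportional_no_strict_coexistence_general {n : ℕ}
    (B1 B2 : Matrix (Fin n) (Fin n) ℝ) (d1 d2 : Fin n → ℝ) (ν : ℝ) (hν : 0 < ν)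
    (hB : B1 = ν • B2) (hD : d1 = ν • d2)
    (hB1 : ∀ i j, 0 ≤ B1 i j) (hd1 : ∀ i, 0 < d1 i)
    (p1 p2 : Fin n → ℝ)
    (hp1 : ∀ i, 0 < p1 i ∧ p1 i < 1) (hp2 : ∀ i, 0 < p2 i ∧ p2 i < 1)
    (heq1 : ((1 - Matrix.diagonal p1) * ((Matrix.diagonal d1)⁻¹ * B1)).mulVec p1 = p1)
    (heq2 : ((1 - Matrix.diagonal p2) * ((Matrix.diagonal d2)⁻¹ * B2)).mulVec p2 = p2) :
    p1 = p2 ∧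
    spectralAbscissa (-(Matrix.diagonal d1) + (1 - Matrix.diagonal p2) * B1) = 0 ∧
    spectralAbscissa (-(Matrix.diagonal d2) + (1 - Matrix.diagonal p1) * B2) = 0 ∧
    ¬(0 < spectralAbscissa (-(Matrix.diagonal d1) + (1 - Matrix.diagonal p2) * B1) ∧
      0 < spectralAbscissa (-(Matrix.diagonal d2) + (1 - Matrix.diagonal p1) * B2)) := by
  have hd2 : ∀ i, 0 < d2 i := fun i =>
    (mul_pos_iff_of_pos_left hν).mp (by simpa [hD] using hd1 i)
  have hB2 : ∀ i j, 0 ≤ B2 i j := fun i j =>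
    (mul_nonneg_iff_of_pos_left hν).mp (by simpa [hB] using hB1 i j)
  have heq2' : IsSISEquilibrium B1 d1 p2 := by
    rwa [hB, hD, isSISEquilibrium_smul_iff (fun i => (hd2 i).ne') hν.ne']
  obtain rfl : p1 = p2 := IsSISEquilibrium.eq hB1 hd1 hp1 hp2 heq1 heq2'
  have hp1_le : ∀ i, p1 i ≤ 1 := fun i => (hp1 i).2.le
  have hp1_pos : ∀ i, 0 < p1 i := fun i => (hp1 i).1
  have h1 := spectralAbscissa_eq_zero_of_metzler_of_mulVec_eq_zero
    (metzler_neg_diagonal_add_one_sub_diagonal_mul d1 hp1_le hB1) hp1_pos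
    (IsSISEquilibrium.neg_diagonal_add_mulVec_eq_zero (fun i => (hd1 i).ne') heq1)
  have h2 := spectralAbscissa_eq_zero_of_metzler_of_mulVec_eq_zero
    (metzler_neg_diagonal_add_one_sub_diagonal_mul d2 hp1_le hB2) hp1_pos
    (IsSISEquilibrium.neg_diagonal_add_mulVec_eq_zero (fun i => (hd2 i).ne') heq2)
  exact ⟨rfl, h1, h2, fun h => h.1.ne' h1⟩

/-- In the bi-virus SIS model with proportional parameters B¹ = νB², D¹ = νD², the two
single-virus endemic equilibria coincide and the invasion spectral abscissae vanish, so
the strict coexistence conditions cannot hold. -/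
theorem sis_proportional_no_strict_coexistence {n : ℕ}
    (B1 B2 : Matrix (Fin n) (Fin n) ℝ) (d1 d2 : Fin n → ℝ) (ν : ℝ) (hν : 0 < ν)
    (hB : B1 = ν • B2) (hD : d1 = ν • d2)
    (hB1 : ∀ i j, 0 ≤ B1 i j) (hirr : Irred B1) (hd1 : ∀ i, 0 < d1 i)
    (hs1 : 0 < spectralAbscissa (B1 - Matrix.diagonal d1))
    (hs2 : 0 < spectralAbscissa (B2 - Matrix.diagonal d2))
    (p1 p2 : Fin n → ℝ)
    (hp1 : ∀ i, 0 < p1 i ∧ p1 i < 1) (hp2 : ∀ i, 0 < p2 i ∧ p2 i < 1)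
    (heq1 : ((1 - Matrix.diagonal p1) * ((Matrix.diagonal d1)⁻¹ * B1)).mulVec p1 = p1)
    (heq2 : ((1 - Matrix.diagonal p2) * ((Matrix.diagonal d2)⁻¹ * B2)).mulVec p2 = p2) :
    p1 = p2 ∧
    spectralAbscissa (-(Matrix.diagonal d1) + (1 - Matrix.diagonal p2) * B1) = 0 ∧
    spectralAbscissa (-(Matrix.diagonal d2) + (1 - Matrix.diagonal p1) * B2) = 0 ∧
    ¬(0 < spectralAbscissa (-(Matrix.diagonal d1) + (1 - Matrix.diagonal p2) * B1) ∧
      0 < spectralAbscissa (-(Matrix.diagonal d2) + (1 - Matrix.diagonal p1) * B2)) :=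
  sis_proportional_no_strict_coexistence_general B1 B2 d1 d2 ν hν hB hD hB1 hd1 p1 p2 hp1 hp2 heq1
    heq2
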